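/- Let k be a commutative ring and suppose given DGA maps φ_{M'}: R' → M', φ_{N'}: R' → N', φ_M: R → M, φ_N: R → N, f: R' → R, u: M' → M, v: N' → N, together with DGA homotopies h_M: u∘φ_{M'} ≃ φ_M∘f and h_N: v∘φ_{N'} ≃ φ_N∘f. Then the induced graded k-module map Tor_f(u,v;h_M,h_N) := Tor_f(π₁,π₁) ∘ Tor_{id}(π₀,π₀)⁻¹ ∘ Tor_{id}(u,v): Tor_{R'}(M',N') → Tor_R(M,N) is well defined, and it is an isomorphism whenever u, f, and v are quasi-isomorphisms. -/
import Mathlib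


noncomputable section

namespace TorPaper

/-- An augmented, nonnegatively graded, associative differential graded `k`-algebra
whose differential increases degree by one. -/
structure DGA (k : Type) [CommRing k] : Type 1 where
  carrier : Type
  [ring : Ring carrier]
  [alg : Algebra k carrier]
  grading : ℕ → Submodule k carrier
  one_mem : (1 : carrier) ∈ grading 0
  mul_mem : ∀ {m n : ℕ} {x y : carrier}, x ∈ grading m → y ∈ grading n →
    x * y ∈ grading (m + n)
  grading_exhaustive : (⨆ n : ℕ, grading n) = ⊤
  d : carrier →ₗ[k] carrier
  d_mem : ∀ {n : ℕ} {x : carrier}, x ∈ grading n → d x ∈ grading (n + 1)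
  d_sq : ∀ x : carrier, d (d x) = 0
  leibniz : ∀ (m : ℕ) (x y : carrier), x ∈ grading m →
    d (x * y) = d x * y + ((-1 : ℤ) ^ m) • (x * d y)
  aug : carrier →ₐ[k] k
  aug_pos : ∀ (n : ℕ) (x : carrier), x ∈ grading (n + 1) → aug x = 0
  aug_d : ∀ x : carrier, aug (d x) = 0

attribute [instance] DGA.ring DGA.alg

variable {k : Type} [CommRing k]

/-- A morphism of augmented DGAs. -/
structure DGAHom (A B : DGA k) where
  toFun : A.carrier → B.carrier
  map_one' : toFun 1 = 1
  map_mul' : ∀ x y, toFun (x * y) = toFun x * toFun y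
  map_add' : ∀ x y, toFun (x + y) = toFun x + toFun y
  map_smul' : ∀ (c : k) (x : A.carrier), toFun (c • x) = c • toFun x
  map_d' : ∀ x, toFun (A.d x) = B.d (toFun x)
  map_grading' : ∀ (n : ℕ) (x : A.carrier), x ∈ A.grading n → toFun x ∈ B.grading n
  map_aug' : ∀ x, B.aug (toFun x) = A.aug x

namespace DGAHom

/-- The identity DGA morphism. -/
protected def id (A : DGA k) : DGAHom A A where
  toFun := fun x => x
  map_one' := rfl
  map_mul' := fun _ _ => rfl
  map_add' := fun _ _ => rfl
  map_smul' := fun _ _ => rfl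
  map_d' := fun _ => rfl
  map_grading' := fun _ _ h => h
  map_aug' := fun _ => rfl

/-- Composition of DGA morphisms. -/
protected def comp {A B C : DGA k} (g : DGAHom B C) (f : DGAHom A B) : DGAHom A C where
  toFun := fun x => g.toFun (f.toFun x)
  map_one' := by simp only [f.map_one', g.map_one']
  map_mul' := fun x y => by simp only [f.map_mul', g.map_mul']
  map_add' := fun x y => by simp only [f.map_add', g.map_add']
  map_smul' := fun c x => by simp only [f.map_smul', g.map_smul']
  map_d' := fun x => by simp only [f.map_d', g.map_d']
  map_grading' := fun n x h => g.map_grading' n _ (f.map_grading' n x h)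
  map_aug' := fun x => by simp only [g.map_aug', f.map_aug']

theorem ext {A B : DGA k} {f g : DGAHom A B} (h : ∀ x, f.toFun x = g.toFun x) : f = g := by
  cases f; cases g
  have h' : _ = _ := funext h
  subst h'
  rfl

@[simp] theorem comp_id {A B : DGA k} (f : DGAHom A B) : f.comp (DGAHom.id A) = f := rfl
@[simp] theorem id_comp {A B : DGA k} (f : DGAHom A B) : (DGAHom.id B).comp f = f := rfl
theorem comp_assoc {A B C D : DGA k} (h : DGAHom C D) (g : DGAHom B C) (f : DGAHom A B) :
    (h.comp g).comp f = h.comp (g.comp f) := rfl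

end DGAHom

/-- A quasi-isomorphism of DGAs: the induced map on cohomology (cocycles modulo
coboundaries) is bijective. -/
def IsQuism {A B : DGA k} (f : DGAHom A B) : Prop :=
  (∀ x : A.carrier, A.d x = 0 → (∃ y, f.toFun x = B.d y) → ∃ z, x = A.d z) ∧
  (∀ y : B.carrier, B.d y = 0 → ∃ x, A.d x = 0 ∧ ∃ z, y - f.toFun x = B.d z)

theorem isQuism_id (A : DGA k) : IsQuism (DGAHom.id A) :=
  ⟨fun _ _ h => h, fun y hy => ⟨y, hy, 0, by simp [DGAHom.id]⟩⟩

/-- A DGA homotopy `h : f₀ ≃ f₁`: a degree `-1` map with `εh = 0`, `hη = 0`,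
`d h + h d = f₀ - f₁` and `hμ = μ(f₀ ⊗ h + h ⊗ f₁)` (with the Koszul sign). -/
structure DGAHomotopy {A B : DGA k} (f₀ f₁ : DGAHom A B) where
  h : A.carrier → B.carrier
  h_add : ∀ x y, h (x + y) = h x + h y
  h_smul : ∀ (c : k) (x : A.carrier), h (c • x) = c • h x
  h_deg : ∀ (n : ℕ) (x : A.carrier), x ∈ A.grading (n + 1) → h x ∈ B.grading n
  h_deg_zero : ∀ x : A.carrier, x ∈ A.grading 0 → h x = 0
  h_aug : ∀ x, B.aug (h x) = 0
  h_one : h 1 = 0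
  h_d : ∀ x, B.d (h x) + h (A.d x) = f₀.toFun x - f₁.toFun x
  h_mul : ∀ (m : ℕ) (x y : A.carrier), x ∈ A.grading m →
    h (x * y) = ((-1 : ℤ) ^ m) • (f₀.toFun x * h y) + h x * f₁.toFun y

/-- Transport of a DGA homotopy along equalities of its endpoints. -/
def DGAHomotopy.cast {A B : DGA k} {f₀ f₁ g₀ g₁ : DGAHom A B}
    (e₀ : f₀ = g₀) (e₁ : f₁ = g₁) (H : DGAHomotopy f₀ f₁) : DGAHomotopy g₀ g₁ :=
  e₀ ▸ e₁ ▸ H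

/-- A graded `k`-module (with possibly nontrivial components in any integer degree). -/
structure GrMod (k : Type) [CommRing k] : Type 1 where
  carrier : Type
  [acg : AddCommGroup carrier]
  [mod : Module k carrier]
  grading : ℤ → Submodule k carrier

attribute [instance] GrMod.acg GrMod.mod

/-- A framework packaging the classical apparatus of Munkholm's paper: the category of
(coaugmented, cocomplete) DGCs, the bar and cobar constructions and their adjunction,
tensor products, the shuffle maps `∇` and `γ`, the natural map `ψ` and the internal
tensor product `⊠`, standard path objects and their relatives, and differential `Tor`
with its functoriality and exterior product.  All listed properties are the standard
facts established in the literature. -/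
structure Framework (k : Type) [CommRing k] : Type 2 where
  /-- objects of the category of coaugmented cocomplete DGCs -/
  DGC : Type 1
  /-- morphisms of DGCs -/
  DGCHom : DGC → DGC → Type
  idC : ∀ C : DGC, DGCHom C C
  compC : ∀ {C D E : DGC}, DGCHom D E → DGCHom C D → DGCHom C E
  /-- `DGCHomotopic g₀ g₁` holds iff there is a DGC homotopy between `g₀` and `g₁`. -/
  DGCHomotopic : ∀ {C D : DGC}, DGCHom C D → DGCHom C D → Prop
  /-- the bar construction -/
  bar : DGA k → DGC
  barMap : ∀ {A B : DGA k}, DGAHom A B → DGCHom (bar A) (bar B)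
  /-- the cobar construction -/
  cobar : DGC → DGA k
  cobarMap : ∀ {C D : DGC}, DGCHom C D → DGAHom (cobar C) (cobar D)
  cobarMap_comp : ∀ {C D E : DGC} (g : DGCHom D E) (f : DGCHom C D),
    cobarMap (compC g f) = (cobarMap g).comp (cobarMap f)
  cobarMap_id : ∀ C : DGC, cobarMap (idC C) = DGAHom.id (cobar C)
  /-- the counit `ε : ΩB A → A` of the adjunction `Ω ⊣ B` -/
  counit : ∀ A : DGA k, DGAHom (cobar (bar A)) A
  counit_quism : ∀ A : DGA k, IsQuism (counit A)
  /-- the unit `η : C → BΩ C` of the adjunction `Ω ⊣ B` -/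
  unitC : ∀ C : DGC, DGCHom C (bar (cobar C))
  /-- `Ω` takes DGC homotopies to DGA homotopies -/
  cobarHomotopy : ∀ {C D : DGC} {g₀ g₁ : DGCHom C D}, DGCHomotopic g₀ g₁ →
    Nonempty (DGAHomotopy (cobarMap g₀) (cobarMap g₁))
  /-- composition of DGA homotopies between maps out of a cobar construction -/
  homotopyComp : ∀ {C : DGC} {X : DGA k} {f₀ f₁ f₂ : DGAHom (cobar C) X},
    DGAHomotopy f₀ f₁ → DGAHomotopy f₁ f₂ → DGAHomotopy f₀ f₂
  /-- precomposition of a DGA homotopy with a DGA map -/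
  precompH : ∀ {A' A B : DGA k} {f₀ f₁ : DGAHom A B} (g : DGAHom A' A),
    DGAHomotopy f₀ f₁ → DGAHomotopy (f₀.comp g) (f₁.comp g)
  /-- postcomposition of a DGA homotopy with a DGA map -/
  postcompH : ∀ {A B B' : DGA k} {f₀ f₁ : DGAHom A B} (φ : DGAHom B B'),
    DGAHomotopy f₀ f₁ → DGAHomotopy (φ.comp f₀) (φ.comp f₁)
  /-- the (Koszul-signed) tensor product of DGAs -/
  tensor : DGA k → DGA k → DGA k
  tensorMap : ∀ {A A' B B' : DGA k}, DGAHom A A' → DGAHom B B' →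
    DGAHom (tensor A B) (tensor A' B')
  /-- the tensor product of DGCs -/
  tensorC : DGC → DGC → DGC
  tensorCMap : ∀ {C C' D D' : DGC}, DGCHom C C' → DGCHom D D' →
    DGCHom (tensorC C D) (tensorC C' D')
  /-- the graded transposition `χ : A ⊗ B → B ⊗ A`, `a ⊗ b ↦ (-1)^{|a||b|} b ⊗ a` -/
  braid : ∀ A B : DGA k, DGAHom (tensor A B) (tensor B A)
  /-- the associator of the tensor product -/
  assocT : ∀ A B B' : DGA k, DGAHom (tensor (tensor A B) B') (tensor A (tensor B B'))
  /-- the base ring `k` viewed as a DGA concentrated in degree `0` -/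
  triv : DGA k
  trivIso : triv.carrier ≃ₐ[k] k
  /-- the unit map `η : k → A` of a DGA -/
  unitHom : ∀ A : DGA k, DGAHom triv A
  unitHom_natural : ∀ {A B : DGA k} (f : DGAHom A B), f.comp (unitHom A) = unitHom B
  /-- the unitor `A ≅ k ⊗ A` -/
  lunitor : ∀ A : DGA k, DGAHom A (tensor triv A)
  /-- the unitor `A ≅ A ⊗ k` -/
  runitor : ∀ A : DGA k, DGAHom A (tensor A triv)
  /-- the cobar shuffle map `γ : Ω(C ⊗ D) → ΩC ⊗ ΩD` -/
  gamma : ∀ C D : DGC, DGAHom (cobar (tensorC C D)) (tensor (cobar C) (cobar D))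
  gamma_quism : ∀ C D : DGC, IsQuism (gamma C D)
  gamma_natural : ∀ {C C' D D' : DGC} (f : DGCHom C C') (g : DGCHom D D'),
    (tensorMap (cobarMap f) (cobarMap g)).comp (gamma C D)
      = (gamma C' D').comp (cobarMap (tensorCMap f g))
  /-- the bar shuffle map `∇ : BA ⊗ BB → B(A ⊗ B)` -/
  nabla : ∀ A B : DGA k, DGCHom (tensorC (bar A) (bar B)) (bar (tensor A B))
  nabla_quism : ∀ A B : DGA k, IsQuism (cobarMap (nabla A B))
  /-- the natural map `ψ : ΩB(A ⊗ B) → ΩBA ⊗ ΩBB` -/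
  psi : ∀ A B : DGA k, DGAHom (cobar (bar (tensor A B)))
    (tensor (cobar (bar A)) (cobar (bar B)))
  psi_counit : ∀ A B : DGA k,
    (tensorMap (counit A) (counit B)).comp (psi A B) = counit (tensor A B)
  /-- the internal tensor product `g₁ ⊠ g₂` of `A∞`-maps -/
  boxTimes : ∀ {A₁ B₁ A₂ B₂ : DGA k},
    DGCHom (bar A₁) (bar B₁) → DGCHom (bar A₂) (bar B₂) →
    DGCHom (bar (tensor A₁ A₂)) (bar (tensor B₁ B₂))
  boxTimes_def : ∀ {A₁ B₁ A₂ B₂ : DGA k} (g₁ : DGCHom (bar A₁) (bar B₁))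
    (g₂ : DGCHom (bar A₂) (bar B₂)),
    boxTimes g₁ g₂ =
      compC (barMap (tensorMap ((counit B₁).comp (cobarMap g₁))
          ((counit B₂).comp (cobarMap g₂))))
        (compC (barMap (psi A₁ A₂)) (unitC (bar (tensor A₁ A₂))))
  /-- `∇ ∘ (g₁ ⊗ g₂) = (g₁ ⊠ g₂) ∘ ∇` -/
  nabla_box : ∀ {A₁ B₁ A₂ B₂ : DGA k} (g₁ : DGCHom (bar A₁) (bar B₁))
    (g₂ : DGCHom (bar A₂) (bar B₂)),
    compC (boxTimes g₁ g₂) (nabla A₁ A₂) = compC (nabla B₁ B₂) (tensorCMap g₁ g₂)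
  /-- `IsWHC Φ` holds iff the twisting cochain associated to `Φ : B(A ⊗ A) → BA`
  restricts, via the desuspension, to the multiplication of `A`; that is, iff `Φ`
  is a weakly homotopy commutative algebra structure on `A`. -/
  IsWHC : ∀ {A : DGA k}, DGCHom (bar (tensor A A)) (bar A) → Prop
  /-- the standard path object `PA = k ⊕ (I* ⊗ Ā) ⊆ I* ⊗ A` -/
  P : DGA k → DGA k
  Pmap : ∀ {A B : DGA k}, DGAHom A B → DGAHom (P A) (P B)
  /-- the endpoint projection `π₀ : PA → A` -/
  pi0 : ∀ A : DGA k, DGAHom (P A) A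
  /-- the endpoint projection `π₁ : PA → A` -/
  pi1 : ∀ A : DGA k, DGAHom (P A) A
  pi0_quism : ∀ A : DGA k, IsQuism (pi0 A)
  pi1_quism : ∀ A : DGA k, IsQuism (pi1 A)
  pi0_natural : ∀ {A B : DGA k} (f : DGAHom A B), (pi0 B).comp (Pmap f) = f.comp (pi0 A)
  pi1_natural : ∀ {A B : DGA k} (f : DGAHom A B), (pi1 B).comp (Pmap f) = f.comp (pi1 A)
  /-- the section `ζ : A → PA`, `a ↦ (v₀ + v₁) ⊗ a` -/
  zeta : ∀ A : DGA k, DGAHom A (P A)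
  zeta_pi0 : ∀ A : DGA k, (pi0 A).comp (zeta A) = DGAHom.id A
  zeta_pi1 : ∀ A : DGA k, (pi1 A).comp (zeta A) = DGAHom.id A
  /-- the right homotopy `h^P : A' → PB`, `a ↦ v₀ ⊗ f₀(a) - e ⊗ h(a) + v₁ ⊗ f₁(a)`,
  representing a DGA homotopy `h : f₀ ≃ f₁` -/
  rep : ∀ {A' B : DGA k} {f₀ f₁ : DGAHom A' B}, DGAHomotopy f₀ f₁ → DGAHom A' (P B)
  rep_pi0 : ∀ {A' B : DGA k} {f₀ f₁ : DGAHom A' B} (H : DGAHomotopy f₀ f₁),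
    (pi0 B).comp (rep H) = f₀
  rep_pi1 : ∀ {A' B : DGA k} {f₀ f₁ : DGAHom A' B} (H : DGAHomotopy f₀ f₁),
    (pi1 B).comp (rep H) = f₁
  /-- conversely, every DGA map into `PB` encodes a DGA homotopy between its endpoints -/
  decode : ∀ {A' B : DGA k} (g : DGAHom A' (P B)),
    DGAHomotopy ((pi0 B).comp g) ((pi1 B).comp g)
  decode_rep : ∀ {A' B : DGA k} (g : DGAHom A' (P B)),
    rep (decode g) = g
  /-- the `k`-linear insertion `x ↦ v₁ ⊗ x : B → PB` -/
  insOne : ∀ B : DGA k, B.carrier → (P B).carrier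
  /-- the double-path object `DA = PA ×_A PA` -/
  Dobj : DGA k → DGA k
  Dmap : ∀ {A B : DGA k}, DGAHom A B → DGAHom (Dobj A) (Dobj B)
  dpr1 : ∀ A : DGA k, DGAHom (Dobj A) (P A)
  dpr2 : ∀ A : DGA k, DGAHom (Dobj A) (P A)
  dpr_compat : ∀ A : DGA k, (pi1 A).comp (dpr1 A) = (pi0 A).comp (dpr2 A)
  dpair : ∀ {A' A : DGA k} (g₁ g₂ : DGAHom A' (P A)),
    (pi1 A).comp g₁ = (pi0 A).comp g₂ → DGAHom A' (Dobj A)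
  dpair_pr1 : ∀ {A' A : DGA k} (g₁ g₂ : DGAHom A' (P A))
    (h : (pi1 A).comp g₁ = (pi0 A).comp g₂), (dpr1 A).comp (dpair g₁ g₂ h) = g₁
  dpair_pr2 : ∀ {A' A : DGA k} (g₁ g₂ : DGAHom A' (P A))
    (h : (pi1 A).comp g₁ = (pi0 A).comp g₂), (dpr2 A).comp (dpair g₁ g₂ h) = g₂
  /-- the triple-path object `TA = PA ×_A PA ×_A PA` -/
  Tobj : DGA k → DGA k
  tpr1 : ∀ A : DGA k, DGAHom (Tobj A) (P A)
  tpr2 : ∀ A : DGA k, DGAHom (Tobj A) (P A)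
  tpr3 : ∀ A : DGA k, DGAHom (Tobj A) (P A)
  tpr_compat12 : ∀ A : DGA k, (pi1 A).comp (tpr1 A) = (pi0 A).comp (tpr2 A)
  tpr_compat23 : ∀ A : DGA k, (pi1 A).comp (tpr2 A) = (pi0 A).comp (tpr3 A)
  tpair : ∀ {A' A : DGA k} (g₁ g₂ g₃ : DGAHom A' (P A)),
    (pi1 A).comp g₁ = (pi0 A).comp g₂ → (pi1 A).comp g₂ = (pi0 A).comp g₃ →
    DGAHom A' (Tobj A)
  tpair_pr1 : ∀ {A' A : DGA k} (g₁ g₂ g₃ : DGAHom A' (P A))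
    (h12 : (pi1 A).comp g₁ = (pi0 A).comp g₂) (h23 : (pi1 A).comp g₂ = (pi0 A).comp g₃),
    (tpr1 A).comp (tpair g₁ g₂ g₃ h12 h23) = g₁
  tpair_pr3 : ∀ {A' A : DGA k} (g₁ g₂ g₃ : DGAHom A' (P A))
    (h12 : (pi1 A).comp g₁ = (pi0 A).comp g₂) (h23 : (pi1 A).comp g₂ = (pi0 A).comp g₃),
    (tpr3 A).comp (tpair g₁ g₂ g₃ h12 h23) = g₃
  /-- differential `Tor` of a span of DGA maps `M ← R → N`, as a graded `k`-module -/
  Tor : ∀ {R M N : DGA k}, DGAHom R M → DGAHom R N → GrMod k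
  /-- functoriality of differential `Tor` in strictly commuting triples of DGA maps -/
  torMap : ∀ {R R' M M' N N' : DGA k} {φM : DGAHom R M} {φN : DGAHom R N}
    {φM' : DGAHom R' M'} {φN' : DGAHom R' N'}
    (f : DGAHom R R') (u : DGAHom M M') (v : DGAHom N N'),
    u.comp φM = φM'.comp f → v.comp φN = φN'.comp f →
    (Tor φM φN).carrier →ₗ[k] (Tor φM' φN').carrier
  /-- a triple of quasi-isomorphisms induces an isomorphism on `Tor` (Gugenheim–May) -/
  torMap_bij : ∀ {R R' M M' N N' : DGA k} {φM : DGAHom R M} {φN : DGAHom R N}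
    {φM' : DGAHom R' M'} {φN' : DGAHom R' N'}
    (f : DGAHom R R') (u : DGAHom M M') (v : DGAHom N N')
    (hM : u.comp φM = φM'.comp f) (hN : v.comp φN = φN'.comp f),
    IsQuism f → IsQuism u → IsQuism v → Function.Bijective (torMap f u v hM hN)
  /-- functoriality of `torMap` under composition of strictly commuting triples -/
  torMap_comp : ∀ {R R' R'' M M' M'' N N' N'' : DGA k}
    {φM : DGAHom R M} {φN : DGAHom R N} {φM' : DGAHom R' M'} {φN' : DGAHom R' N'}
    {φM'' : DGAHom R'' M''} {φN'' : DGAHom R'' N''}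
    (f : DGAHom R R') (u : DGAHom M M') (v : DGAHom N N')
    (hM : u.comp φM = φM'.comp f) (hN : v.comp φN = φN'.comp f)
    (f' : DGAHom R' R'') (u' : DGAHom M' M'') (v' : DGAHom N' N'')
    (hM' : u'.comp φM' = φM''.comp f') (hN' : v'.comp φN' = φN''.comp f'),
    (torMap f' u' v' hM' hN').comp (torMap f u v hM hN)
      = torMap (f'.comp f) (u'.comp u) (v'.comp v)
          (by rw [DGAHom.comp_assoc, hM, ← DGAHom.comp_assoc, hM', DGAHom.comp_assoc])
          (by rw [DGAHom.comp_assoc, hN, ← DGAHom.comp_assoc, hN', DGAHom.comp_assoc])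
  /-- the classical exterior (external) product on differential `Tor` -/
  extMul : ∀ {R M N R' M' N' : DGA k} (φM : DGAHom R M) (φN : DGAHom R N)
    (φM' : DGAHom R' M') (φN' : DGAHom R' N'),
    (Tor φM φN).carrier →ₗ[k] (Tor φM' φN').carrier →ₗ[k]
      (Tor (tensorMap φM φM') (tensorMap φN φN')).carrier
  /-- the canonical isomorphism `k ≅ Tor_k(k, k)` -/
  torUnit : k ≃ₗ[k] (Tor (DGAHom.id triv) (DGAHom.id triv)).carrier

namespace Framework

variable {k : Type} [CommRing k] (F : Framework k)

/-- The map on differential `Tor` induced by a triple of DGA maps `(f, u, v)` whose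
compatibility squares commute only up to the DGA homotopies `hM` and `hN`:
`Tor_f(u,v; h_M,h_N) := Tor_f(π₁,π₁) ∘ Tor_id(π₀,π₀)⁻¹ ∘ Tor_id(u,v)`,
using the standard path-object representatives of the homotopies. -/
def torHtpyMap {R' R M' M N' N : DGA k}
    {φM' : DGAHom R' M'} {φN' : DGAHom R' N'} {φM : DGAHom R M} {φN : DGAHom R N}
    (f : DGAHom R' R) (u : DGAHom M' M) (v : DGAHom N' N)
    (hM : DGAHomotopy (u.comp φM') (φM.comp f))
    (hN : DGAHomotopy (v.comp φN') (φN.comp f)) :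
    (F.Tor φM' φN').carrier →ₗ[k] (F.Tor φM φN).carrier :=
  (F.torMap f (F.pi1 M) (F.pi1 N) (F.rep_pi1 hM) (F.rep_pi1 hN)).comp
    (((LinearEquiv.ofBijective
        (F.torMap (φM' := u.comp φM') (φN' := v.comp φN') (DGAHom.id R')
          (F.pi0 M) (F.pi0 N) (by rw [F.rep_pi0 hM, DGAHom.comp_id]) (by rw [F.rep_pi0 hN, DGAHom.comp_id]))
        (F.torMap_bij _ _ _ _ _ (isQuism_id R') (F.pi0_quism M) (F.pi0_quism N))).symm.toLinearMap).comp
      (F.torMap (φM' := u.comp φM') (φN' := v.comp φN') (DGAHom.id R') u v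
        (DGAHom.comp_id _).symm (DGAHom.comp_id _).symm))

/-- The unit of the product on `Tor`: the image of `1 ∈ k ≅ Tor_k(k,k)` under the map
induced by the unit maps `η : k → ΩBA`, `η : k → ΩBX`, `η : k → ΩBY`. -/
def torOne {A X Y : DGA k}
    (xi : F.DGCHom (F.bar A) (F.bar X)) (up : F.DGCHom (F.bar A) (F.bar Y)) :
    (F.Tor (F.cobarMap xi) (F.cobarMap up)).carrier :=
  F.torMap (F.unitHom (F.cobar (F.bar A))) (F.unitHom (F.cobar (F.bar X)))
    (F.unitHom (F.cobar (F.bar Y)))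
    (by rw [DGAHom.comp_id, F.unitHom_natural])
    (by rw [DGAHom.comp_id, F.unitHom_natural])
    (F.torUnit (1 : k))

/-- The product `Π` on `Tor_{ΩBA}(ΩBX, ΩBY)` determined by WHC-structure maps
`Φ_A, Φ_X, Φ_Y`, `A∞`-maps `ξ : BA → BX`, `υ : BA → BY`, and chosen DGA homotopies
`h_X : ΩΦ_X ∘ Ω(ξ ⊠ ξ) ≃ Ωξ ∘ ΩΦ_A` and `h_Y : ΩΦ_Y ∘ Ω(υ ⊠ υ) ≃ Ωυ ∘ ΩΦ_A`.
It is the composite of the exterior product, the inverse of the isomorphism induced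
by the cobar shuffle `γ`, the isomorphism induced by `Ω∇` for the bar shuffle `∇`,
and the homotopy-induced map determined by `ΩΦ_A`, `ΩΦ_X`, `ΩΦ_Y` and the chosen
homotopies, via standard path-object representatives. -/
def torProd {A X Y : DGA k}
    (PhiA : F.DGCHom (F.bar (F.tensor A A)) (F.bar A))
    (PhiX : F.DGCHom (F.bar (F.tensor X X)) (F.bar X))
    (PhiY : F.DGCHom (F.bar (F.tensor Y Y)) (F.bar Y))
    (xi : F.DGCHom (F.bar A) (F.bar X)) (up : F.DGCHom (F.bar A) (F.bar Y))
    (hX : DGAHomotopy ((F.cobarMap PhiX).comp (F.cobarMap (F.boxTimes xi xi)))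
      ((F.cobarMap xi).comp (F.cobarMap PhiA)))
    (hY : DGAHomotopy ((F.cobarMap PhiY).comp (F.cobarMap (F.boxTimes up up)))
      ((F.cobarMap up).comp (F.cobarMap PhiA))) :
    (F.Tor (F.cobarMap xi) (F.cobarMap up)).carrier →ₗ[k]
      (F.Tor (F.cobarMap xi) (F.cobarMap up)).carrier →ₗ[k]
      (F.Tor (F.cobarMap xi) (F.cobarMap up)).carrier :=
  (F.extMul (F.cobarMap xi) (F.cobarMap up) (F.cobarMap xi) (F.cobarMap up)).compr₂ <|
    (F.torHtpyMap
        (φM' := (F.cobarMap PhiX).comp (F.cobarMap (F.boxTimes xi xi)))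
        (φN' := (F.cobarMap PhiY).comp (F.cobarMap (F.boxTimes up up)))
        (F.cobarMap PhiA) (DGAHom.id (F.cobar (F.bar X)))
        (DGAHom.id (F.cobar (F.bar Y))) hX hY).comp <|
    (F.torMap
        (φM' := (F.cobarMap PhiX).comp (F.cobarMap (F.boxTimes xi xi)))
        (φN' := (F.cobarMap PhiY).comp (F.cobarMap (F.boxTimes up up)))
        (DGAHom.id (F.cobar (F.bar (F.tensor A A)))) (F.cobarMap PhiX)
        (F.cobarMap PhiY) (DGAHom.comp_id _).symm (DGAHom.comp_id _).symm).comp <|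
    (F.torMap (F.cobarMap (F.nabla A A)) (F.cobarMap (F.nabla X X))
        (F.cobarMap (F.nabla Y Y))
        (by rw [← F.cobarMap_comp, ← F.cobarMap_comp, F.nabla_box])
        (by rw [← F.cobarMap_comp, ← F.cobarMap_comp, F.nabla_box])).comp <|
    (LinearEquiv.ofBijective
        (F.torMap (F.gamma (F.bar A) (F.bar A)) (F.gamma (F.bar X) (F.bar X))
          (F.gamma (F.bar Y) (F.bar Y))
          (F.gamma_natural xi xi).symm (F.gamma_natural up up).symm)
        (F.torMap_bij _ _ _ _ _ (F.gamma_quism _ _) (F.gamma_quism _ _)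
          (F.gamma_quism _ _))).symm.toLinearMap

/-- The map `Tor_{ff'}(uu',vv')` induced by a vertically composed pair of
homotopy-commuting rectangles; in general it is defined by conjugating by the
natural isomorphism induced by the counit quasi-isomorphism `ε : ΩB R'' → R''`,
composing the homotopies over the cobar construction `ΩB R''`. -/
def torBigMap {R'' R' R M'' M' M N'' N' N : DGA k}
    {φM'' : DGAHom R'' M''} {φN'' : DGAHom R'' N''}
    {φM' : DGAHom R' M'} {φN' : DGAHom R' N'}
    {φM : DGAHom R M} {φN : DGAHom R N}
    (f' : DGAHom R'' R') (f : DGAHom R' R)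
    (u' : DGAHom M'' M') (u : DGAHom M' M)
    (v' : DGAHom N'' N') (v : DGAHom N' N)
    (hM' : DGAHomotopy (u'.comp φM'') (φM'.comp f'))
    (hN' : DGAHomotopy (v'.comp φN'') (φN'.comp f'))
    (hM : DGAHomotopy (u.comp φM') (φM.comp f))
    (hN : DGAHomotopy (v.comp φN') (φN.comp f)) :
    (F.Tor φM'' φN'').carrier →ₗ[k] (F.Tor φM φN).carrier :=
  letI ε := F.counit R''
  letI HM : DGAHomotopy ((u.comp u').comp (φM''.comp ε)) (φM.comp ((f.comp f').comp ε)) :=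
    F.homotopyComp (C := F.bar R'') (F.postcompH u (F.precompH ε hM'))
      (F.precompH (f'.comp ε) hM)
  letI HN : DGAHomotopy ((v.comp v').comp (φN''.comp ε)) (φN.comp ((f.comp f').comp ε)) :=
    F.homotopyComp (C := F.bar R'') (F.postcompH v (F.precompH ε hN'))
      (F.precompH (f'.comp ε) hN)
  (F.torHtpyMap ((f.comp f').comp ε) (u.comp u') (v.comp v') HM HN).comp
    (LinearEquiv.ofBijective
      (F.torMap (φM := φM''.comp ε) (φN := φN''.comp ε) (φM' := φM'') (φN' := φN'')
        ε (DGAHom.id M'') (DGAHom.id N'') (DGAHom.id_comp _) (DGAHom.id_comp _))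
      (F.torMap_bij _ _ _ _ _ (F.counit_quism R'') (isQuism_id M'')
        (isQuism_id N''))).symm.toLinearMap

end Framework

/-- Given DGA maps `φ_{M'} : R' → M'`, `φ_{N'} : R' → N'`,
`φ_M : R → M`, `φ_N : R → N`, `f : R' → R`, `u : M' → M`, `v : N' → N` together with
DGA homotopies `h_M : u∘φ_{M'} ≃ φ_M∘f` and `h_N : v∘φ_{N'} ≃ φ_N∘f`, the induced
graded `k`-module map
`Tor_f(u,v;h_M,h_N) := Tor_f(π₁,π₁) ∘ Tor_id(π₀,π₀)⁻¹ ∘ Tor_id(u,v)`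
(which is `Framework.torHtpyMap`, hence well defined) is an isomorphism whenever
`u`, `f` and `v` are quasi-isomorphisms. -/
theorem statement_12 {k : Type} [CommRing k] (F : Framework k)
    {R' R M' M N' N : DGA k}
    (φM' : DGAHom R' M') (φN' : DGAHom R' N') (φM : DGAHom R M) (φN : DGAHom R N)
    (f : DGAHom R' R) (u : DGAHom M' M) (v : DGAHom N' N)
    (hM : DGAHomotopy (u.comp φM') (φM.comp f))
    (hN : DGAHomotopy (v.comp φN') (φN.comp f))
    (hu : IsQuism u) (hf : IsQuism f) (hv : IsQuism v) :
    Function.Bijective (F.torHtpyMap f u v hM hN) := by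
  have h1 := F.torMap_bij f (F.pi1 M) (F.pi1 N) (F.rep_pi1 hM) (F.rep_pi1 hN)
    hf (F.pi1_quism M) (F.pi1_quism N)
  have h2 := F.torMap_bij (φM' := u.comp φM') (φN' := v.comp φN') (DGAHom.id R') u v
    (DGAHom.comp_id _).symm (DGAHom.comp_id _).symm (isQuism_id R') hu hv
  exact h1.comp ((LinearEquiv.ofBijective
      (F.torMap (φM' := u.comp φM') (φN' := v.comp φN') (DGAHom.id R')
        (F.pi0 M) (F.pi0 N) (by rw [F.rep_pi0 hM, DGAHom.comp_id])
        (by rw [F.rep_pi0 hN, DGAHom.comp_id]))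
      (F.torMap_bij _ _ _ _ _ (isQuism_id R') (F.pi0_quism M)
        (F.pi0_quism N))).symm.bijective.comp h2)

end TorPaper
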